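/- arXiv:2402.06412 — 5 statements merged into one kernel-verified Lean document; each statement's English description precedes it below -/
import Mathlib

section
/- If f_i(x) = (1/2) x^T A_i x + b_i^T x + c_i with A_i symmetric d×d matrices, and A = (1/n) Σ_{i=1}^n A_i, then for all x, u_1, ..., u_n in R^d, ||(1/n) Σ_{i=1}^n (∇f_i(x+u_i) - ∇f_i(x))||^2 ≤ 2 (max_i ||A_i - A||)^2 · (1/n) Σ_{i=1}^n ||u_i||^2 + 2 ((1/n) Σ_{i=1}^n ||A_i||)^2 · ||(1/n) Σ_{i=1}^n u_i||^2. -/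
open RealInnerProductSpace

/-!
Since `A i` is symmetric, `∇f_i y = A i y + b i`, so the gradient differences are `A i (u i)`.
Writing `A i = Ā + (A i - Ā)`, their average splits into the average of the deviations
`(A i - Ā) (u i)`, which by Cauchy–Schwarz over the index set has square at most
`(max_i ‖A i - Ā‖)² · (1/n) ∑ ‖u i‖²`, and `Ā` applied to the mean of the `u i`, where
`‖Ā‖ ≤ (1/n) ∑ ‖A i‖`. The factors `2` come from `‖a + b‖² ≤ 2‖a‖² + 2‖b‖²`.
-/

theorem hasGradientAt_quadratic {E : Type*} [NormedAddCommGroup E] [InnerProductSpace ℝ E]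
    [CompleteSpace E] {T : E →L[ℝ] E} (hT : (T : E →ₗ[ℝ] E).IsSymmetric)
    (b : E) (c : ℝ) (y : E) :
    HasGradientAt (fun z => (1 / 2) * ⟪z, T z⟫ + ⟪b, z⟫ + c) (T y + b) y := by
  rw [hasGradientAt_iff_hasFDerivAt]
  have hquad := ((hasFDerivAt_id y).inner ℝ T.hasFDerivAt).const_mul (1 / 2 : ℝ)
  refine ((hquad.add (innerSL ℝ b).hasFDerivAt).add_const c).congr_fderiv ?_
  ext v
  have hsymm : ⟪T y, v⟫ = ⟪y, T v⟫ := hT y v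
  simp only [InnerProductSpace.toDual_apply_apply, add_apply,
    smul_apply, ContinuousLinearMap.comp_apply,
    ContinuousLinearMap.prod_apply, id_eq, fderivInnerCLM_apply, innerSL_apply_apply,
    smul_eq_mul, inner_add_left]
  rw [ContinuousLinearMap.id_apply, ← hsymm, real_inner_comm (T y) v]
  ring

theorem Matrix.IsSymm.isSymmetric_toEuclideanCLM {d : Type*} [Fintype d] [DecidableEq d]
    {A : Matrix d d ℝ} (hA : A.IsSymm) :
    ((Matrix.toEuclideanCLM (𝕜 := ℝ) A : EuclideanSpace ℝ d →L[ℝ] EuclideanSpace ℝ d) :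
      EuclideanSpace ℝ d →ₗ[ℝ] EuclideanSpace ℝ d).IsSymmetric := by
  simpa [← Matrix.coe_toEuclideanCLM_eq_toEuclideanLin] using
    Matrix.isSymmetric_toEuclideanLin_iff.mpr (Matrix.isHermitian_iff_isSymm.mpr hA)

theorem norm_add_sq_le_two_mul {E : Type*} [SeminormedAddCommGroup E] (a b : E) :
    ‖a + b‖ ^ 2 ≤ 2 * ‖a‖ ^ 2 + 2 * ‖b‖ ^ 2 := by
  nlinarith [norm_add_le a b, norm_nonneg (a + b), sq_nonneg (‖a‖ - ‖b‖)]

section Averages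

variable {ι E F : Type*} [Fintype ι] [NormedAddCommGroup E] [NormedSpace ℝ E]
  [NormedAddCommGroup F] [NormedSpace ℝ F]

theorem norm_card_inv_smul_sum_sq_le (v : ι → E) :
    ‖(Fintype.card ι : ℝ)⁻¹ • ∑ i, v i‖ ^ 2
      ≤ (Fintype.card ι : ℝ)⁻¹ * ∑ i, ‖v i‖ ^ 2 := by
  set N : ℝ := (Fintype.card ι : ℝ)
  have hcs : (∑ i, ‖v i‖) ^ 2 ≤ N * ∑ i, ‖v i‖ ^ 2 := by
    simpa using sq_sum_le_card_mul_sum_sq (s := Finset.univ) (f := fun i => ‖v i‖)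
  have hsum : ‖∑ i, v i‖ ^ 2 ≤ N * ∑ i, ‖v i‖ ^ 2 :=
    (pow_le_pow_left₀ (norm_nonneg _) (norm_sum_le _ _) 2).trans hcs
  calc ‖N⁻¹ • ∑ i, v i‖ ^ 2 = N⁻¹ ^ 2 * ‖∑ i, v i‖ ^ 2 := by
        rw [norm_smul, norm_inv, Real.norm_natCast, mul_pow]
    _ ≤ N⁻¹ ^ 2 * (N * ∑ i, ‖v i‖ ^ 2) := by gcongr
    _ = N⁻¹ * ∑ i, ‖v i‖ ^ 2 := by
        rcases eq_or_ne N 0 with hN | hN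
        · simp [hN]
        · field_simp

theorem norm_card_inv_smul_sum_apply_sq_le (T : ι → E →L[ℝ] F) (u : ι → E) {M : ℝ}
    (hM : ∀ i, ‖T i - (Fintype.card ι : ℝ)⁻¹ • ∑ j, T j‖ ≤ M) :
    ‖(Fintype.card ι : ℝ)⁻¹ • ∑ i, T i (u i)‖ ^ 2
      ≤ 2 * M ^ 2 * ((Fintype.card ι : ℝ)⁻¹ * ∑ i, ‖u i‖ ^ 2)
        + 2 * ((Fintype.card ι : ℝ)⁻¹ * ∑ i, ‖T i‖) ^ 2
          * ‖(Fintype.card ι : ℝ)⁻¹ • ∑ i, u i‖ ^ 2 := by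
  set N : ℝ := (Fintype.card ι : ℝ)
  set Tbar := N⁻¹ • ∑ j, T j
  have hsplit : N⁻¹ • ∑ i, T i (u i) = N⁻¹ • ∑ i, (T i - Tbar) (u i) + Tbar (N⁻¹ • ∑ i, u i) := by
    simp only [sub_apply, Finset.sum_sub_distrib, smul_sub, map_smul, map_sum]
    abel
  have hdev : ‖N⁻¹ • ∑ i, (T i - Tbar) (u i)‖ ^ 2 ≤ M ^ 2 * (N⁻¹ * ∑ i, ‖u i‖ ^ 2) := by
    have hterm : ∀ i, ‖(T i - Tbar) (u i)‖ ^ 2 ≤ M ^ 2 * ‖u i‖ ^ 2 := fun i => by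
      rw [← mul_pow]
      exact pow_le_pow_left₀ (norm_nonneg _)
        (((T i - Tbar).le_opNorm (u i)).trans (by gcongr; exact hM i)) 2
    calc ‖N⁻¹ • ∑ i, (T i - Tbar) (u i)‖ ^ 2 ≤ N⁻¹ * ∑ i, ‖(T i - Tbar) (u i)‖ ^ 2 :=
          norm_card_inv_smul_sum_sq_le _
      _ ≤ N⁻¹ * ∑ i, M ^ 2 * ‖u i‖ ^ 2 := by gcongr with i; exact hterm i
      _ = M ^ 2 * (N⁻¹ * ∑ i, ‖u i‖ ^ 2) := by rw [← Finset.mul_sum]; ring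
  have hTbar : ‖Tbar‖ ≤ N⁻¹ * ∑ i, ‖T i‖ := by
    refine (norm_smul_le N⁻¹ (∑ j, T j)).trans ?_
    rw [norm_inv, Real.norm_natCast]
    gcongr
    exact norm_sum_le _ _
  have hmean : ‖Tbar (N⁻¹ • ∑ i, u i)‖ ^ 2
      ≤ (N⁻¹ * ∑ i, ‖T i‖) ^ 2 * ‖N⁻¹ • ∑ i, u i‖ ^ 2 := by
    rw [← mul_pow]
    exact pow_le_pow_left₀ (norm_nonneg _) ((Tbar.le_opNorm _).trans (by gcongr)) 2
  rw [hsplit]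
  linarith [norm_add_sq_le_two_mul (N⁻¹ • ∑ i, (T i - Tbar) (u i)) (Tbar (N⁻¹ • ∑ i, u i))]

end Averages

/-- For quadratics `f_i(x) = ½ xᵀA_i x + b_iᵀx + c_i` with `Ā = (1/n) ∑ A_i`,
`‖(1/n)∑(∇f_i(x+u_i)-∇f_i(x))‖² ≤ 2 (max_i ‖A_i - Ā‖)² (1/n)∑‖u_i‖²
  + 2 ((1/n)∑‖A_i‖)² ‖(1/n)∑ u_i‖²`, operator norms throughout. -/
theorem stmt_2 {d n : ℕ} (hn : 0 < n)
    (A : Fin n → Matrix (Fin d) (Fin d) ℝ) (hA : ∀ i, (A i).IsSymm)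
    (b : Fin n → EuclideanSpace ℝ (Fin d)) (c : Fin n → ℝ)
    (f : Fin n → EuclideanSpace ℝ (Fin d) → ℝ)
    (hf : ∀ i (x : EuclideanSpace ℝ (Fin d)),
      f i x = (1 / 2) * (inner ℝ x (Matrix.toEuclideanCLM (𝕜 := ℝ) (A i) x) : ℝ)
        + (inner ℝ (b i) x : ℝ) + c i)
    (x : EuclideanSpace ℝ (Fin d)) (u : Fin n → EuclideanSpace ℝ (Fin d)) :
    ‖(n : ℝ)⁻¹ • (∑ i, (gradient (f i) (x + u i) - gradient (f i) x))‖ ^ 2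
      ≤ 2 * (Finset.univ.sup' (Finset.univ_nonempty_iff.mpr ⟨⟨0, hn⟩⟩)
              (fun i => ‖Matrix.toEuclideanCLM (𝕜 := ℝ)
                (A i - (n : ℝ)⁻¹ • (∑ j, A j))‖)) ^ 2
            * ((n : ℝ)⁻¹ * ∑ i, ‖u i‖ ^ 2)
        + 2 * ((n : ℝ)⁻¹ * ∑ i, ‖Matrix.toEuclideanCLM (𝕜 := ℝ) (A i)‖) ^ 2
            * ‖(n : ℝ)⁻¹ • (∑ i, u i)‖ ^ 2 := by
  set T := fun i => Matrix.toEuclideanCLM (𝕜 := ℝ) (A i)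
  have hgrad : ∀ i y, gradient (f i) y = T i y + b i := fun i y => by
    rw [show f i = _ from funext (hf i)]
    exact (hasGradientAt_quadratic (Matrix.IsSymm.isSymmetric_toEuclideanCLM (hA i))
      (b i) (c i) y).gradient
  have hdiff : ∀ i, gradient (f i) (x + u i) - gradient (f i) x = T i (u i) := fun i => by
    rw [hgrad, hgrad, map_add]
    abel
  have hM : ∀ i, ‖T i - (Fintype.card (Fin n) : ℝ)⁻¹ • ∑ j, T j‖
      ≤ Finset.univ.sup' (Finset.univ_nonempty_iff.mpr ⟨⟨0, hn⟩⟩)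
          (fun i => ‖Matrix.toEuclideanCLM (𝕜 := ℝ) (A i - (n : ℝ)⁻¹ • (∑ j, A j))‖) := fun i => by
    simpa only [Fintype.card_fin, map_sub, map_smul, map_sum] using
      Finset.le_sup' (fun i => ‖Matrix.toEuclideanCLM (𝕜 := ℝ) (A i - (n : ℝ)⁻¹ • (∑ j, A j))‖)
        (Finset.mem_univ i)
  simp only [hdiff]
  simpa only [Fintype.card_fin] using norm_card_inv_smul_sum_apply_sq_le T u hM
end

section
/- Let d = q·n with q a positive integer, let π be a uniformly random permutation of {1,...,d}, and define the PermK compressor C_i(x) = n · Σ_{j=q(i-1)+1}^{qi} x_{π_j} e_{π_j} for each i ∈ [n]. Then for every x ∈ R^d and every i ∈ [n]: (a) E[C_i(x)] = x; (b) E[||C_i(x) - x||^2] = (n-1) ||x||^2; (c) (1/n) Σ_{i=1}^n C_i(x) = x deterministically. -/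
/-!
For a fixed position `j`, the coordinate `π j` of a uniformly random permutation is uniform, so
averaging `f (π j)` over `π` gives the mean of `f`. Since `C_i(x)` is `n` times the restriction of
`x` to the `q = d / n` random coordinates `π(block i)`, this gives `E[C_i(x)] = n · (q / d) · x = x`,
and expanding `‖n y - x‖² = (n² - 2n)‖y‖² + ‖x‖²` for that restriction `y`, with
`E‖y‖² = ‖x‖² / n`, gives `(n - 1)‖x‖²`. The blocks partition the indices, so the `C_i(x)` together
restore every coordinate of `x` exactly once, scaled by `n`.
-/

open Finset

section UniformCoordinate

variable {α : Type*} [Fintype α] [DecidableEq α]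

theorem card_smul_sum_perm_apply {M : Type*} [AddCommMonoid M] (f : α → M) (a : α) :
    Fintype.card α • ∑ σ : Equiv.Perm α, f (σ a) =
      Fintype.card (Equiv.Perm α) • ∑ b, f b := by
  have h_indep : ∀ b, ∑ σ : Equiv.Perm α, f (σ b) = ∑ σ : Equiv.Perm α, f (σ a) := fun b =>
    Fintype.sum_equiv (Equiv.mulRight (Equiv.swap a b)) _ _ fun σ => by simp
  calc Fintype.card α • ∑ σ : Equiv.Perm α, f (σ a)
      = ∑ b, ∑ σ : Equiv.Perm α, f (σ b) := by simp [h_indep]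
    _ = ∑ σ : Equiv.Perm α, ∑ b, f (σ b) := sum_comm
    _ = ∑ σ : Equiv.Perm α, ∑ b, f b := sum_congr rfl fun σ _ => Equiv.sum_comp σ f
    _ = Fintype.card (Equiv.Perm α) • ∑ b, f b := by simp

theorem inv_card_perm_smul_sum_perm_apply {𝕜 E : Type*} [Field 𝕜] [CharZero 𝕜]
    [AddCommGroup E] [Module 𝕜 E] (f : α → E) (a : α) :
    (Fintype.card (Equiv.Perm α) : 𝕜)⁻¹ • ∑ σ : Equiv.Perm α, f (σ a) =
      (Fintype.card α : 𝕜)⁻¹ • ∑ b, f b := by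
  have h := card_smul_sum_perm_apply f a
  rw [← Nat.cast_smul_eq_nsmul 𝕜, ← Nat.cast_smul_eq_nsmul 𝕜] at h
  have hα : (Fintype.card α : 𝕜) ≠ 0 := Nat.cast_ne_zero.mpr (Fintype.card_pos_iff.mpr ⟨a⟩).ne'
  have hP : (Fintype.card (Equiv.Perm α) : 𝕜) ≠ 0 := Nat.cast_ne_zero.mpr Fintype.card_ne_zero
  rw [← inv_smul_smul₀ hα (∑ σ : Equiv.Perm α, f (σ a)), h, smul_comm, inv_smul_smul₀ hP]

theorem EuclideanSpace.univ_sum_single (x : EuclideanSpace ℝ α) :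
    ∑ k, EuclideanSpace.single k (x k) = x := by
  ext m
  simp

omit [Fintype α] in
theorem EuclideanSpace.finsetSum_single_apply (T : Finset α) (x : EuclideanSpace ℝ α) (m : α) :
    (∑ k ∈ T, EuclideanSpace.single k (x k)) m = if m ∈ T then x m else 0 := by
  simp

theorem norm_smul_sum_single_sub_sq (c : ℝ) (T : Finset α) (x : EuclideanSpace ℝ α) :
    ‖c • ∑ k ∈ T, EuclideanSpace.single k (x k) - x‖ ^ 2 =
      (c ^ 2 - 2 * c) * ∑ k ∈ T, x k ^ 2 + ‖x‖ ^ 2 := by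
  simp only [EuclideanSpace.real_norm_sq_eq, PiLp.sub_apply, PiLp.smul_apply, smul_eq_mul,
    EuclideanSpace.finsetSum_single_apply]
  rw [← Fintype.sum_ite_mem T (fun k => x k ^ 2), mul_sum, ← sum_add_distrib]
  exact sum_congr rfl fun m _ => by split_ifs <;> ring

theorem inv_card_perm_smul_sum_smul_sum_single_perm (c : ℝ) (S : Finset α)
    (x : EuclideanSpace ℝ α) :
    (Fintype.card (Equiv.Perm α) : ℝ)⁻¹ •
        ∑ σ : Equiv.Perm α, c • ∑ j ∈ S, EuclideanSpace.single (σ j) (x (σ j)) =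
      (c * (#S / Fintype.card α)) • x := by
  rw [← smul_sum, sum_comm, smul_comm, smul_sum]
  simp_rw [inv_card_perm_smul_sum_perm_apply (fun k => EuclideanSpace.single k (x k)),
    EuclideanSpace.univ_sum_single, sum_const, ← Nat.cast_smul_eq_nsmul ℝ, smul_smul]
  rw [div_eq_mul_inv]

theorem inv_card_perm_mul_sum_norm_smul_sum_single_perm_sub_sq (c : ℝ) (S : Finset α)
    (x : EuclideanSpace ℝ α) :
    (Fintype.card (Equiv.Perm α) : ℝ)⁻¹ *
        ∑ σ : Equiv.Perm α, ‖c • ∑ j ∈ S, EuclideanSpace.single (σ j) (x (σ j)) - x‖ ^ 2 =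
      ((c ^ 2 - 2 * c) * (#S / Fintype.card α) + 1) * ‖x‖ ^ 2 := by
  have h_norm (σ : Equiv.Perm α) :
      ‖c • ∑ j ∈ S, EuclideanSpace.single (σ j) (x (σ j)) - x‖ ^ 2 =
        (c ^ 2 - 2 * c) * ∑ j ∈ S, x (σ j) ^ 2 + ‖x‖ ^ 2 := by
    have h_map := sum_map S σ.toEmbedding (fun k => EuclideanSpace.single k (x k))
    have h_map_sq := sum_map S σ.toEmbedding (fun k => x k ^ 2)
    simp only [Equiv.coe_toEmbedding] at h_map h_map_sq
    rw [← h_map, ← h_map_sq, norm_smul_sum_single_sub_sq]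
  have h_avg (j : α) : (Fintype.card (Equiv.Perm α) : ℝ)⁻¹ * ∑ σ : Equiv.Perm α, x (σ j) ^ 2 =
      (Fintype.card α : ℝ)⁻¹ * ‖x‖ ^ 2 := by
    simpa [EuclideanSpace.real_norm_sq_eq] using
      inv_card_perm_smul_sum_perm_apply (𝕜 := ℝ) (fun k => x k ^ 2) j
  calc (Fintype.card (Equiv.Perm α) : ℝ)⁻¹ *
        ∑ σ : Equiv.Perm α, ‖c • ∑ j ∈ S, EuclideanSpace.single (σ j) (x (σ j)) - x‖ ^ 2
      = (c ^ 2 - 2 * c) * ∑ j ∈ S,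
          (Fintype.card (Equiv.Perm α) : ℝ)⁻¹ * ∑ σ : Equiv.Perm α, x (σ j) ^ 2 + ‖x‖ ^ 2 := by
        simp only [h_norm, sum_add_distrib, ← mul_sum, sum_const, card_univ, nsmul_eq_mul]
        rw [sum_comm]
        field_simp
    _ = ((c ^ 2 - 2 * c) * (#S / Fintype.card α) + 1) * ‖x‖ ^ 2 := by
        simp only [h_avg, sum_const, nsmul_eq_mul]
        ring

end UniformCoordinate

/-- Indexed from `0`: the paper's block `{q(i-1)+1, …, qi}` for `i ∈ [n]`. -/
def block (d q i : ℕ) : Finset (Fin d) := {j | q * i ≤ j ∧ j < q * (i + 1)}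

theorem card_block {d q i : ℕ} (h : q * (i + 1) ≤ d) : #(block d q i) = q := by
  have h_map : (block d q i).map Fin.valEmbedding = Ico (q * i) (q * (i + 1)) := by
    ext m
    simp only [block, mem_map, mem_filter, mem_univ, true_and, Fin.valEmbedding_apply, mem_Ico]
    constructor
    · rintro ⟨j, hj, rfl⟩
      exact hj
    · intro hm
      exact ⟨⟨m, by omega⟩, hm, rfl⟩
  rw [← card_map, h_map, Nat.card_Ico, mul_add, mul_one, Nat.add_sub_cancel_left]

theorem mem_block_iff_div_eq {d q : ℕ} (hq : 0 < q) (i : ℕ) (j : Fin d) :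
    j ∈ block d q i ↔ (j : ℕ) / q = i := by
  rw [block, mem_filter, Nat.div_eq_iff hq, mul_add, mul_one, mul_comm q i]
  simp only [mem_univ, true_and]
  omega

theorem sum_sum_block {M : Type*} [AddCommMonoid M] {d q n : ℕ} (hq : 0 < q) (hd : d ≤ q * n)
    (F : Fin d → M) : ∑ i : Fin n, ∑ j ∈ block d q i, F j = ∑ j, F j := by
  let g : Fin d → Fin n := fun j => ⟨j / q, Nat.div_lt_of_lt_mul (by omega)⟩
  rw [← sum_fiberwise univ g F]
  refine sum_congr rfl fun i _ => sum_congr ?_ fun _ _ => rfl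
  ext j
  simp [mem_block_iff_div_eq hq, g, Fin.ext_iff]

/-- PermK compressors. With `d = q·n`, a uniformly random permutation `π` of
`{1,…,d}` and `C_i(x) = n ∑_{j=q(i-1)+1}^{qi} x_{π_j} e_{π_j}`, for all `x` and `i`:
(a) `E[C_i(x)] = x`; (b) `E‖C_i(x) - x‖² = (n-1)‖x‖²`;
(c) `(1/n) ∑_i C_i(x) = x` deterministically. Expectation = uniform average over `π`. -/
theorem stmt_5 {n q : ℕ} (hn : 0 < n) (hq : 0 < q) (d : ℕ) (hd : d = q * n)
    (C : Fin n → Equiv.Perm (Fin d) → EuclideanSpace ℝ (Fin d) → EuclideanSpace ℝ (Fin d))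
    (hC : ∀ (i : Fin n) (π : Equiv.Perm (Fin d)) (x : EuclideanSpace ℝ (Fin d)),
      C i π x = (n : ℝ) •
        ∑ j ∈ Finset.univ.filter
            (fun j : Fin d => q * (i : ℕ) ≤ (j : ℕ) ∧ (j : ℕ) < q * ((i : ℕ) + 1)),
          EuclideanSpace.single (π j) (x (π j)))
    (x : EuclideanSpace ℝ (Fin d)) (i : Fin n) :
    ((Fintype.card (Equiv.Perm (Fin d)) : ℝ)⁻¹ • (∑ π : Equiv.Perm (Fin d), C i π x) = x)
    ∧ ((Fintype.card (Equiv.Perm (Fin d)) : ℝ)⁻¹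
          * (∑ π : Equiv.Perm (Fin d), ‖C i π x - x‖ ^ 2) = ((n : ℝ) - 1) * ‖x‖ ^ 2)
    ∧ (∀ π : Equiv.Perm (Fin d), (n : ℝ)⁻¹ • (∑ i' : Fin n, C i' π x) = x) := by
  have hC_block (i : Fin n) (π : Equiv.Perm (Fin d)) :
      C i π x = (n : ℝ) • ∑ j ∈ block d q i, EuclideanSpace.single (π j) (x (π j)) :=
    hC i π x
  have hn₀ : (n : ℝ) ≠ 0 := Nat.cast_ne_zero.mpr hn.ne'
  have h_ratio : (#(block d q i) / Fintype.card (Fin d) : ℝ) = (n : ℝ)⁻¹ := by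
    rw [card_block (hd ▸ Nat.mul_le_mul_left q i.isLt), Fintype.card_fin, hd]
    push_cast
    field_simp
  refine ⟨?_, ?_, fun π => ?_⟩
  · simp_rw [hC_block, inv_card_perm_smul_sum_smul_sum_single_perm, h_ratio,
      mul_inv_cancel₀ hn₀, one_smul]
  · simp_rw [hC_block, inv_card_perm_mul_sum_norm_smul_sum_single_perm_sub_sq, h_ratio]
    field_simp
    ring
  · rw [sum_congr rfl fun i _ => hC_block i π, ← smul_sum,
      sum_sum_block hq hd.le fun j => EuclideanSpace.single (π j) (x (π j)),
      Equiv.sum_comp π fun k => EuclideanSpace.single k (x k), EuclideanSpace.univ_sum_single,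
      inv_smul_smul₀ hn₀]
end

section
/- Assume the functions f_i : R^d -> R are twice continuously differentiable, each L_i-smooth, and there exist D_i ≥ 0 such that for all z_1,...,z_n ∈ R^d and each i, ||∇²f_i(z_i) - (1/n) Σ_{j=1}^n ∇²f_j(z_j)|| ≤ D_i (operator norm). Then for all x, u_1,...,u_n ∈ R^d: ||(1/n) Σ_{i=1}^n (∇f_i(x+u_i) - ∇f_i(x))||^2 ≤ 2 (max_i D_i)^2 (1/n) Σ_{i=1}^n ||u_i||^2 + 2 ((1/n) Σ_{i=1}^n L_i)^2 ||(1/n) Σ_{i=1}^n u_i||^2. -/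
/-!
Along the segments `t ↦ x + t • uᵢ` the averaged gradient difference has derivative
`(1/n) ∑ Hᵢ uᵢ`, where `Hᵢ` is the Hessian of `fᵢ` at `x + t • uᵢ`. Writing `H̄` for the average
Hessian, `(1/n) ∑ Hᵢ uᵢ = (1/n) ∑ (Hᵢ - H̄) uᵢ + H̄ ((1/n) ∑ uᵢ)`: the first term is controlled
by the Hessian dissimilarity and the second by the average smoothness constant. The mean value
inequality transfers this bound to the gradient differences, and `(a + b)² ≤ 2a² + 2b²`
together with Cauchy–Schwarz gives the squared form.
-/

open Finset Set

theorem ContDiff.gradient {F : Type*} [NormedAddCommGroup F] [InnerProductSpace ℝ F]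
    [CompleteSpace F] {f : F → ℝ} {m n : WithTop ℕ∞} (hf : ContDiff ℝ n f) (hmn : m + 1 ≤ n) :
    ContDiff ℝ m (gradient f) :=
  (InnerProductSpace.toDual ℝ F).symm.contDiff.comp (hf.fderiv_right hmn)

theorem sq_inv_card_mul_sum_le {ι : Type*} (s : Finset ι) (a : ι → ℝ) :
    ((#s : ℝ)⁻¹ * ∑ i ∈ s, a i) ^ 2 ≤ (#s : ℝ)⁻¹ * ∑ i ∈ s, a i ^ 2 := by
  rcases s.eq_empty_or_nonempty with rfl | hs
  · simp
  rw [mul_pow, sq, mul_assoc]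
  gcongr
  rw [inv_mul_le_iff₀ (by exact_mod_cast hs.card_pos)]
  exact sq_sum_le_card_mul_sum_sq

section

variable {ι E F : Type*} [Fintype ι] [NormedAddCommGroup E] [NormedSpace ℝ E]
  [NormedAddCommGroup F] [NormedSpace ℝ F]

theorem norm_smul_sum_apply_le (c : ℝ) (hc : 0 ≤ c) (H : ι → E →L[ℝ] F) (Hbar : E →L[ℝ] F)
    (u : ι → E) {δ Λ : ℝ} (hδ : ∀ i, ‖H i - Hbar‖ ≤ δ) (hΛ : ‖Hbar‖ ≤ Λ) :
    ‖c • ∑ i, H i (u i)‖ ≤ δ * (c * ∑ i, ‖u i‖) + Λ * ‖c • ∑ i, u i‖ := by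
  have hsplit : c • ∑ i, H i (u i) = c • ∑ i, (H i - Hbar) (u i) + Hbar (c • ∑ i, u i) := by
    simp only [sub_apply, sum_sub_distrib, map_smul, map_sum, smul_sub]
    abel
  have hdev : ‖c • ∑ i, (H i - Hbar) (u i)‖ ≤ δ * (c * ∑ i, ‖u i‖) := by
    rw [norm_smul, Real.norm_of_nonneg hc, mul_left_comm, mul_sum]
    gcongr
    refine (norm_sum_le _ _).trans (sum_le_sum fun i _ => ?_)
    exact (H i - Hbar).le_of_opNorm_le (hδ i) (u i)
  rw [hsplit]
  exact (norm_add_le _ _).trans (add_le_add hdev (Hbar.le_of_opNorm_le hΛ _))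

theorem norm_smul_sum_sub_le_of_norm_fderiv_le {g : ι → E → F} (hg : ∀ i, Differentiable ℝ (g i))
    (c : ℝ) (x : E) (u : ι → E) {K : ℝ}
    (bound : ∀ t ∈ Ico (0 : ℝ) 1, ‖c • ∑ i, fderiv ℝ (g i) (x + t • u i) (u i)‖ ≤ K) :
    ‖c • ∑ i, (g i (x + u i) - g i x)‖ ≤ K := by
  have hline : ∀ i t, HasDerivAt (fun t : ℝ => g i (x + t • u i))
      (fderiv ℝ (g i) (x + t • u i) (u i)) t := fun i t =>
    (hg i _).hasFDerivAt.comp_hasDerivAt t (by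
      simpa using ((hasDerivAt_id t).smul_const (u i)).const_add x)
  have hderiv : ∀ t : ℝ, HasDerivAt (fun t : ℝ => c • ∑ i, g i (x + t • u i))
      (c • ∑ i, fderiv ℝ (g i) (x + t • u i) (u i)) t := fun t =>
    (HasDerivAt.fun_sum fun i _ => hline i t).const_smul c
  simpa [sum_sub_distrib, smul_sub] using
    norm_image_sub_le_of_norm_deriv_le_segment_01' (fun t _ => (hderiv t).hasDerivWithinAt) bound

end

theorem stmt_14_general {d n : ℕ} (hn : 0 < n)
    (f : Fin n → EuclideanSpace ℝ (Fin d) → ℝ)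
    (hC2 : ∀ i, ContDiff ℝ 2 (f i))
    (L D : Fin n → ℝ)
    (hL : ∀ i (z : EuclideanSpace ℝ (Fin d)), ‖fderiv ℝ (gradient (f i)) z‖ ≤ L i)
    (hHess : ∀ i (z : Fin n → EuclideanSpace ℝ (Fin d)),
      ‖fderiv ℝ (gradient (f i)) (z i)
          - (n : ℝ)⁻¹ • (∑ j, fderiv ℝ (gradient (f j)) (z j))‖ ≤ D i)
    (x : EuclideanSpace ℝ (Fin d)) (u : Fin n → EuclideanSpace ℝ (Fin d)) :
    ‖(n : ℝ)⁻¹ • (∑ i, (gradient (f i) (x + u i) - gradient (f i) x))‖ ^ 2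
      ≤ 2 * (Finset.univ.sup' (Finset.univ_nonempty_iff.mpr ⟨⟨0, hn⟩⟩) D) ^ 2
            * ((n : ℝ)⁻¹ * ∑ i, ‖u i‖ ^ 2)
        + 2 * ((n : ℝ)⁻¹ * ∑ i, L i) ^ 2 * ‖(n : ℝ)⁻¹ • (∑ i, u i)‖ ^ 2 := by
  set Dmax := Finset.univ.sup' (Finset.univ_nonempty_iff.mpr ⟨⟨0, hn⟩⟩) D
  set Lavg := (n : ℝ)⁻¹ * ∑ i, L i
  have hgrad : ∀ i, Differentiable ℝ (gradient (f i)) := fun i =>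
    ((hC2 i).gradient (m := 1) le_rfl).differentiable one_ne_zero
  have hmv : ‖(n : ℝ)⁻¹ • (∑ i, (gradient (f i) (x + u i) - gradient (f i) x))‖
      ≤ Dmax * ((n : ℝ)⁻¹ * ∑ i, ‖u i‖) + Lavg * ‖(n : ℝ)⁻¹ • (∑ i, u i)‖ := by
    refine norm_smul_sum_sub_le_of_norm_fderiv_le hgrad _ x u fun t _ => ?_
    refine norm_smul_sum_apply_le _ (by positivity) _ _ u
      (fun i => (hHess i fun j => x + t • u j).trans (le_sup' D (mem_univ i))) ?_
    rw [norm_smul, Real.norm_of_nonneg (by positivity)]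
    exact mul_le_mul_of_nonneg_left
      ((norm_sum_le _ _).trans (sum_le_sum fun j _ => hL j _)) (by positivity)
  have hCS : ((n : ℝ)⁻¹ * ∑ i, ‖u i‖) ^ 2 ≤ (n : ℝ)⁻¹ * ∑ i, ‖u i‖ ^ 2 := by
    simpa using sq_inv_card_mul_sum_le univ fun i => ‖u i‖
  calc _ ≤ (Dmax * ((n : ℝ)⁻¹ * ∑ i, ‖u i‖) + Lavg * ‖(n : ℝ)⁻¹ • (∑ i, u i)‖) ^ 2 := by
        gcongr
    _ ≤ 2 * ((Dmax * ((n : ℝ)⁻¹ * ∑ i, ‖u i‖)) ^ 2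
          + (Lavg * ‖(n : ℝ)⁻¹ • (∑ i, u i)‖) ^ 2) := add_sq_le
    _ ≤ _ := by
        rw [mul_add, mul_pow Dmax, mul_pow Lavg, ← mul_assoc, ← mul_assoc]
        gcongr

/-- If each `f i` is twice continuously differentiable, `L i`-smooth
(`‖∇²f_i(z)‖ ≤ L i`), and the Hessian dissimilarity is bounded:
`‖∇²f_i(z_i) - (1/n)∑_j ∇²f_j(z_j)‖ ≤ D i` for all `z_1,…,z_n`, then
`‖(1/n)∑(∇f_i(x+u_i)-∇f_i(x))‖² ≤ 2(max_i D_i)² (1/n)∑‖u_i‖²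
  + 2((1/n)∑ L_i)² ‖(1/n)∑ u_i‖²`. -/
theorem stmt_14 {d n : ℕ} (hn : 0 < n)
    (f : Fin n → EuclideanSpace ℝ (Fin d) → ℝ)
    (hC2 : ∀ i, ContDiff ℝ 2 (f i))
    (L D : Fin n → ℝ) (hD0 : ∀ i, 0 ≤ D i)
    (hL : ∀ i (z : EuclideanSpace ℝ (Fin d)), ‖fderiv ℝ (gradient (f i)) z‖ ≤ L i)
    (hHess : ∀ i (z : Fin n → EuclideanSpace ℝ (Fin d)),
      ‖fderiv ℝ (gradient (f i)) (z i)
          - (n : ℝ)⁻¹ • (∑ j, fderiv ℝ (gradient (f j)) (z j))‖ ≤ D i)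
    (x : EuclideanSpace ℝ (Fin d)) (u : Fin n → EuclideanSpace ℝ (Fin d)) :
    ‖(n : ℝ)⁻¹ • (∑ i, (gradient (f i) (x + u i) - gradient (f i) x))‖ ^ 2
      ≤ 2 * (Finset.univ.sup' (Finset.univ_nonempty_iff.mpr ⟨⟨0, hn⟩⟩) D) ^ 2
            * ((n : ℝ)⁻¹ * ∑ i, ‖u i‖ ^ 2)
        + 2 * ((n : ℝ)⁻¹ * ∑ i, L i) ^ 2 * ‖(n : ℝ)⁻¹ • (∑ i, u i)‖ ^ 2 :=
  stmt_14_general hn f hC2 L D hL hHess x u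
end

section
/- Let C_i^t ∈ U(ω_P) for all i ∈ [n] (unbiased compressors with variance parameter ω_P), and let the MARINA-P update set w_i^{t+1} = x^{t+1} with probability p and w_i^{t+1} = w_i^t + C_i^t(x^{t+1} - x^t) with probability 1-p (same coin for all i). Then (1/n) Σ_{i=1}^n E[||w_i^{t+1} - x^{t+1}||^2] ≤ (1-p) (1/n) Σ_{i=1}^n E[||w_i^t - x^t||^2] + (1-p) ω_P E[||x^{t+1} - x^t||^2]. -/
/-! On heads the new error `w_i - x^{t+1}` vanishes; on tails it equals
`(C_i(Δ) - Δ) + (w_i^t - x^t)` with `Δ = x^{t+1} - x^t`. Independence of the coin factors the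
expectation as `(1 - p)` times the tails expectation, and since `C_i(Δ) - Δ` is centred the cross
term vanishes, leaving the compressor variance `≤ ω_P ‖Δ‖²` plus `‖w_i^t - x^t‖²`. -/

open MeasureTheory ProbabilityTheory

section

variable {Ω : Type*} [MeasurableSpace Ω] {μ : Measure Ω}

lemma integral_ite_zero_eq_measureReal_mul_of_indepFun {𝓧 : Type*} [MeasurableSpace 𝓧]
    {coin : Ω → Bool} {X : Ω → 𝓧} (hind : IndepFun coin X μ) (hcoin : Measurable coin)
    (hX : AEMeasurable X μ) {g : 𝓧 → ℝ} (hg : AEStronglyMeasurable g (μ.map X)) :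
    ∫ a, (if coin a then 0 else g (X a)) ∂μ
      = μ.real {a | coin a = false} * ∫ a, g (X a) ∂μ := by
  have hfalse : ∫ a, (if coin a then (0 : ℝ) else 1) ∂μ = μ.real {a | coin a = false} := by
    rw [← integral_indicator_one (s := {a | coin a = false})
      (hcoin (measurableSet_singleton false))]
    congr with a
    cases h : coin a <;> simp [Set.indicator, h]
  have hmul := hind.integral_fun_comp_mul_comp (f := fun b => if b then (0 : ℝ) else 1)
    hcoin.aemeasurable hX measurable_from_top.aestronglyMeasurable hg
  rw [← hfalse, ← hmul]
  congr with a
  cases coin a <;> simp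

variable [IsProbabilityMeasure μ] {E : Type*} [NormedAddCommGroup E] [InnerProductSpace ℝ E]
  [CompleteSpace E]

lemma integral_norm_add_const_sq {Y : Ω → E} (hY : MemLp Y 2 μ) (hmean : ∫ a, Y a ∂μ = 0)
    (c : E) : ∫ a, ‖Y a + c‖ ^ 2 ∂μ = ∫ a, ‖Y a‖ ^ 2 ∂μ + ‖c‖ ^ 2 := by
  have hY1 : Integrable Y μ := hY.integrable one_le_two
  have hsq : Integrable (fun a => ‖Y a‖ ^ 2) μ := hY.integrable_norm_pow two_ne_zero
  have hcross : Integrable (fun a => 2 * inner ℝ c (Y a)) μ :=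
    (hY1.const_inner c).const_mul 2
  have hsum : Integrable (fun a => ‖Y a‖ ^ 2 + 2 * inner ℝ c (Y a)) μ := hsq.add hcross
  have hexpand : (fun a => ‖Y a + c‖ ^ 2)
      = fun a => ‖Y a‖ ^ 2 + 2 * inner ℝ c (Y a) + ‖c‖ ^ 2 := by
    ext a
    rw [norm_add_sq_real, real_inner_comm]
  rw [hexpand, integral_add hsum (integrable_const _), integral_add hsq hcross,
    integral_const_mul, integral_inner hY1, hmean, inner_zero_right, integral_const,
    probReal_univ, one_smul, mul_zero, add_zero]

lemma measureReal_coin_false {coin : Ω → Bool} (hcoin_meas : Measurable coin) {p : ℝ}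
    (hp0 : 0 ≤ p) (hcoin : μ {a | coin a = true} = ENNReal.ofReal p) :
    μ.real {a | coin a = false} = 1 - p := by
  have hcompl : {a | coin a = false} = {a | coin a = true}ᶜ := by ext; simp
  rw [hcompl,
    probReal_compl_eq_one_sub (s := {a | coin a = true}) (hcoin_meas (measurableSet_singleton true)),
    measureReal_def, hcoin, ENNReal.toReal_ofReal hp0]

lemma integral_norm_sq_coin_reset_update [MeasurableSpace E] [BorelSpace E]
    {coin : Ω → Bool} (hcoin_meas : Measurable coin) {p : ℝ} (hp0 : 0 ≤ p)
    (hcoin : μ {a | coin a = true} = ENNReal.ofReal p) {X : Ω → E} (hX : MemLp X 2 μ)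
    (hind : IndepFun coin X μ) {w x x' : E} (hmean : ∫ a, X a ∂μ = x' - x) :
    ∫ a, ‖(if coin a then x' else w + X a) - x'‖ ^ 2 ∂μ
      = (1 - p) * (∫ a, ‖X a - (x' - x)‖ ^ 2 ∂μ + ‖w - x‖ ^ 2) := by
  have hreset : (fun a => ‖(if coin a then x' else w + X a) - x'‖ ^ 2)
      = fun a => if coin a then 0 else ‖X a - (x' - x) + (w - x)‖ ^ 2 := by
    ext a
    cases coin a
    · simp only [Bool.false_eq_true, ↓reduceIte]
      congr 2
      abel
    · simp
  have hcentered : ∫ a, (X a - (x' - x)) ∂μ = 0 := by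
    rw [integral_sub (hX.integrable one_le_two) (integrable_const _), hmean, integral_const,
      probReal_univ, one_smul, sub_self]
  have hcenteredL2 : MemLp (fun a => X a - (x' - x)) 2 μ := hX.sub (memLp_const _)
  rw [hreset,
    integral_ite_zero_eq_measureReal_mul_of_indepFun (g := fun v => ‖v - (x' - x) + (w - x)‖ ^ 2)
      hind hcoin_meas hX.aestronglyMeasurable.aemeasurable
      (by fun_prop : Continuous _).aestronglyMeasurable,
    measureReal_coin_false hcoin_meas hp0 hcoin,
    integral_norm_add_const_sq hcenteredL2 hcentered]

end

theorem stmt_17_general {d n : ℕ} (hn : 0 < n) {Ω : Type*} [MeasurableSpace Ω]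
    (μ : Measure Ω) [IsProbabilityMeasure μ]
    (ωP p : ℝ) (hp0 : 0 ≤ p) (hp1 : p ≤ 1)
    (C : Fin n → EuclideanSpace ℝ (Fin d) → Ω → EuclideanSpace ℝ (Fin d))
    (coin : Ω → Bool) (hcoin_meas : Measurable coin)
    (hcoin : μ {a | coin a = true} = ENNReal.ofReal p)
    (hL2 : ∀ i v, MemLp (C i v) 2 μ)
    (hunb : ∀ i v, (∫ a, C i v a ∂μ) = v)
    (hvar : ∀ i v, (∫ a, ‖C i v a - v‖ ^ 2 ∂μ) ≤ ωP * ‖v‖ ^ 2)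
    (wt : Fin n → EuclideanSpace ℝ (Fin d)) (xt xt1 : EuclideanSpace ℝ (Fin d))
    (hind : ∀ i, IndepFun coin (C i (xt1 - xt)) μ)
    (w1 : Fin n → Ω → EuclideanSpace ℝ (Fin d))
    (hw1 : ∀ i a, w1 i a = if coin a then xt1 else wt i + C i (xt1 - xt) a) :
    (n : ℝ)⁻¹ * ∑ i, (∫ a, ‖w1 i a - xt1‖ ^ 2 ∂μ)
      ≤ (1 - p) * ((n : ℝ)⁻¹ * ∑ i, ‖wt i - xt‖ ^ 2)
        + (1 - p) * ωP * ‖xt1 - xt‖ ^ 2 := by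
  have hworker : ∀ i, ∫ a, ‖w1 i a - xt1‖ ^ 2 ∂μ
      ≤ (1 - p) * ‖wt i - xt‖ ^ 2 + (1 - p) * ωP * ‖xt1 - xt‖ ^ 2 := by
    intro i
    simp_rw [hw1 i]
    rw [integral_norm_sq_coin_reset_update hcoin_meas hp0 hcoin (hL2 i _) (hind i) (hunb i _)]
    have := mul_le_mul_of_nonneg_left (hvar i (xt1 - xt)) (sub_nonneg.2 hp1)
    linarith
  calc (n : ℝ)⁻¹ * ∑ i, (∫ a, ‖w1 i a - xt1‖ ^ 2 ∂μ)
      ≤ (n : ℝ)⁻¹ * ∑ i, ((1 - p) * ‖wt i - xt‖ ^ 2 + (1 - p) * ωP * ‖xt1 - xt‖ ^ 2) := by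
        gcongr with i
        exact hworker i
    _ = (1 - p) * ((n : ℝ)⁻¹ * ∑ i, ‖wt i - xt‖ ^ 2) + (1 - p) * ωP * ‖xt1 - xt‖ ^ 2 := by
        rw [Finset.sum_add_distrib, Finset.sum_const, Finset.card_univ, Fintype.card_fin,
          nsmul_eq_mul, ← Finset.mul_sum]
        field_simp

/-- Lemma on the MARINA-P control variables, per-worker version:
with unbiased compressors `C_i ∈ U(ω_P)` and the update
`w_i^{t+1} = x^{t+1}` w.p. `p` (same coin for all `i`), else
`w_i^{t+1} = w_i^t + C_i(x^{t+1} - x^t)`, we get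
`(1/n)∑ E‖w_i^{t+1} - x^{t+1}‖² ≤ (1-p)(1/n)∑ ‖w_i^t - x^t‖² + (1-p) ω_P ‖x^{t+1}-x^t‖²`. -/
theorem stmt_17 {d n : ℕ} (hn : 0 < n) {Ω : Type*} [MeasurableSpace Ω]
    (μ : Measure Ω) [IsProbabilityMeasure μ]
    (ωP p : ℝ) (hωP : 0 ≤ ωP) (hp0 : 0 ≤ p) (hp1 : p ≤ 1)
    (C : Fin n → EuclideanSpace ℝ (Fin d) → Ω → EuclideanSpace ℝ (Fin d))
    (coin : Ω → Bool) (hcoin_meas : Measurable coin)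
    (hcoin : μ {a | coin a = true} = ENNReal.ofReal p)
    (hL2 : ∀ i v, MemLp (C i v) 2 μ)
    (hunb : ∀ i v, (∫ a, C i v a ∂μ) = v)
    (hvar : ∀ i v, (∫ a, ‖C i v a - v‖ ^ 2 ∂μ) ≤ ωP * ‖v‖ ^ 2)
    (wt : Fin n → EuclideanSpace ℝ (Fin d)) (xt xt1 : EuclideanSpace ℝ (Fin d))
    (hind : ∀ i, IndepFun coin (C i (xt1 - xt)) μ)
    (w1 : Fin n → Ω → EuclideanSpace ℝ (Fin d))
    (hw1 : ∀ i a, w1 i a = if coin a then xt1 else wt i + C i (xt1 - xt) a) :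
    (n : ℝ)⁻¹ * ∑ i, (∫ a, ‖w1 i a - xt1‖ ^ 2 ∂μ)
      ≤ (1 - p) * ((n : ℝ)⁻¹ * ∑ i, ‖wt i - xt‖ ^ 2)
        + (1 - p) * ωP * ‖xt1 - xt‖ ^ 2 :=
  stmt_17_general hn μ ωP p hp0 hp1 C coin hcoin_meas hcoin hL2 hunb hvar wt xt xt1 hind w1 hw1
end

section
/- Let {C_i^t}_{i=1}^n ∈ P(θ), i.e., each C_i^t is unbiased and E[||(1/n) Σ_i C_i^t(v) - v||^2] ≤ θ ||v||^2 for all v. With the MARINA-P update (w_i^{t+1} = x^{t+1} with probability p, otherwise w_i^{t+1} = w_i^t + C_i^t(x^{t+1} - x^t)) and w^t = (1/n) Σ_i w_i^t, it holds that E[||w^{t+1} - x^{t+1}||^2] ≤ (1-p) E[||w^t - x^t||^2] + (1-p) θ E[||x^{t+1} - x^t||^2]. -/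
open MeasureTheory ProbabilityTheory
open scoped BigOperators

/-! Write `v = x^{t+1} - x^t` and `Y = (1/n) ∑ C_i(v)`. On heads `w^{t+1} = x^{t+1}`; on tails
`w^{t+1} - x^{t+1} = (w^t - x^t) + (Y - v)`. The coin is independent of `Y`, so the expectation
factors as `(1 - p) E‖(w^t - x^t) + (Y - v)‖²`, and since `Y - v` is centred the cross term
vanishes, leaving `‖w^t - x^t‖² + E‖Y - v‖² ≤ ‖w^t - x^t‖² + θ‖v‖²`. -/

theorem average_const {E : Type*} [AddCommGroup E] [Module ℝ E] {n : ℕ} (hn : 0 < n) (x : E) :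
    (n : ℝ)⁻¹ • ∑ _i : Fin n, x = x := by
  rw [Finset.sum_const, Finset.card_univ, Fintype.card_fin, ← Nat.cast_smul_eq_nsmul ℝ,
    smul_smul, inv_mul_cancel₀ (by positivity), one_smul]

theorem integral_average_eq_of_integral_eq {Ω E : Type*} [MeasurableSpace Ω] {μ : Measure Ω}
    [NormedAddCommGroup E] [NormedSpace ℝ E] {n : ℕ} (hn : 0 < n) {X : Fin n → Ω → E}
    (hX : ∀ i, Integrable (X i) μ) {v : E} (hXv : ∀ i, ∫ a, X i a ∂μ = v) :
    ∫ a, (n : ℝ)⁻¹ • ∑ i, X i a ∂μ = v := by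
  rw [integral_smul, integral_finsetSum _ fun i _ => hX i]
  simp only [hXv]
  exact average_const hn v

theorem integral_norm_add_sq_of_integral_eq_zero {Ω E : Type*} [MeasurableSpace Ω]
    {μ : Measure Ω} [IsProbabilityMeasure μ] [NormedAddCommGroup E] [InnerProductSpace ℝ E]
    [CompleteSpace E] (c : E) {Z : Ω → E} (hZ : MemLp Z 2 μ) (hZ0 : ∫ a, Z a ∂μ = 0) :
    ∫ a, ‖c + Z a‖ ^ 2 ∂μ = ‖c‖ ^ 2 + ∫ a, ‖Z a‖ ^ 2 ∂μ := by
  have hZint : Integrable Z μ := hZ.integrable one_le_two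
  have hinner : Integrable (fun a => 2 * inner ℝ c (Z a)) μ :=
    ((innerSL ℝ c).integrable_comp hZint).const_mul 2
  have hconst_inner : Integrable (fun a => ‖c‖ ^ 2 + 2 * inner ℝ c (Z a)) μ :=
    (integrable_const _).add hinner
  have hsq : Integrable (fun a => ‖Z a‖ ^ 2) μ :=
    (memLp_two_iff_integrable_sq_norm hZ.aestronglyMeasurable).mp hZ
  have hcross : ∫ a, 2 * inner ℝ c (Z a) ∂μ = 0 := by
    rw [integral_const_mul, integral_inner hZint, hZ0, inner_zero_right, mul_zero]
  simp_rw [norm_add_sq_real]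
  rw [integral_add hconst_inner hsq, integral_add (integrable_const _) hinner, hcross,
    integral_const, probReal_univ, one_smul, add_zero]

section Coin

variable {Ω : Type*} [MeasurableSpace Ω] {μ : Measure Ω} [IsProbabilityMeasure μ]
  {coin : Ω → Bool} {p : ℝ}

theorem integral_ite_zero_one_of_measure_eq (hcoin : Measurable coin) (hp0 : 0 ≤ p)
    (hp : μ {a | coin a = true} = ENNReal.ofReal p) :
    ∫ a, (if coin a then (0 : ℝ) else 1) ∂μ = 1 - p := by
  have hs : MeasurableSet {a | coin a = true} := hcoin (measurableSet_singleton true)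
  have hindicator :
      (fun a => if coin a then (0 : ℝ) else 1) = {a | coin a = true}ᶜ.indicator 1 := by
    ext a; by_cases h : coin a <;> simp [h]
  rw [hindicator, integral_indicator_one hs.compl, probReal_compl_eq_one_sub hs,
    measureReal_def, hp, ENNReal.toReal_ofReal hp0]

theorem integral_ite_zero_of_indepFun (hcoin : Measurable coin) (hp0 : 0 ≤ p)
    (hp : μ {a | coin a = true} = ENNReal.ofReal p) {g : Ω → ℝ} (hg : AEStronglyMeasurable g μ)
    (hind : IndepFun coin g μ) :
    ∫ a, (if coin a then 0 else g a) ∂μ = (1 - p) * ∫ a, g a ∂μ := by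
  have hφ : Measurable fun b : Bool => if b then (0 : ℝ) else 1 := measurable_from_top
  have hmul : (fun a => if coin a then 0 else g a)
      = fun a => (if coin a then (0 : ℝ) else 1) * g a := by
    ext a; cases coin a <;> simp
  rw [hmul, ← integral_ite_zero_one_of_measure_eq hcoin hp0 hp]
  exact (hind.comp hφ measurable_id).integral_fun_mul_eq_mul_integral
    (hφ.comp hcoin).aestronglyMeasurable hg

end Coin

theorem stmt_18_general {d n : ℕ} (hn : 0 < n) {Ω : Type*} [MeasurableSpace Ω]
    (μ : Measure Ω) [IsProbabilityMeasure μ]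
    (θ p : ℝ) (hp0 : 0 ≤ p) (hp1 : p ≤ 1)
    (C : Fin n → EuclideanSpace ℝ (Fin d) → Ω → EuclideanSpace ℝ (Fin d))
    (coin : Ω → Bool) (hcoin_meas : Measurable coin)
    (hcoin : μ {a | coin a = true} = ENNReal.ofReal p)
    (hL2 : ∀ i v, MemLp (C i v) 2 μ)
    (hunb : ∀ i v, (∫ a, C i v a ∂μ) = v)
    (hθ : ∀ v, (∫ a, ‖(n : ℝ)⁻¹ • (∑ i, C i v a) - v‖ ^ 2 ∂μ) ≤ θ * ‖v‖ ^ 2)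
    (wt : Fin n → EuclideanSpace ℝ (Fin d)) (xt xt1 : EuclideanSpace ℝ (Fin d))
    (hind : IndepFun coin (fun a => (n : ℝ)⁻¹ • (∑ i, C i (xt1 - xt) a)) μ)
    (w1 : Fin n → Ω → EuclideanSpace ℝ (Fin d))
    (hw1 : ∀ i a, w1 i a = if coin a then xt1 else wt i + C i (xt1 - xt) a) :
    (∫ a, ‖(n : ℝ)⁻¹ • (∑ i, w1 i a) - xt1‖ ^ 2 ∂μ)
      ≤ (1 - p) * ‖(n : ℝ)⁻¹ • (∑ i, wt i) - xt‖ ^ 2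
        + (1 - p) * θ * ‖xt1 - xt‖ ^ 2 := by
  set v := xt1 - xt
  set A := (n : ℝ)⁻¹ • (∑ i, wt i) - xt
  set Y := fun a => (n : ℝ)⁻¹ • ∑ i, C i v a
  have hY : MemLp Y 2 μ := (memLp_finsetSum Finset.univ fun i _ => hL2 i v).const_smul (n : ℝ)⁻¹
  have hY_sub : MemLp (fun a => Y a - v) 2 μ := hY.sub (memLp_const v)
  have hY_centred : ∫ a, Y a - v ∂μ = 0 := by
    rw [integral_sub (hY.integrable one_le_two) (integrable_const v),
      integral_average_eq_of_integral_eq hn (fun i => (hL2 i v).integrable one_le_two) (hunb · v),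
      integral_const, probReal_univ, one_smul, sub_self]
  have hupdate : ∀ a, ‖(n : ℝ)⁻¹ • ∑ i, w1 i a - xt1‖ ^ 2
      = if coin a then 0 else ‖A + (Y a - v)‖ ^ 2 := by
    intro a
    by_cases h : coin a
    · simp only [hw1, h, if_true, average_const hn]
      simp
    · simp only [hw1, h, Bool.false_eq_true, if_false, Finset.sum_add_distrib, smul_add, A, Y, v]
      congr 2
      abel
  have hf : Continuous fun y => ‖A + (y - v)‖ ^ 2 := by fun_prop
  calc ∫ a, ‖(n : ℝ)⁻¹ • ∑ i, w1 i a - xt1‖ ^ 2 ∂μ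
      = (1 - p) * ∫ a, ‖A + (Y a - v)‖ ^ 2 ∂μ := by
        simp_rw [hupdate]
        exact integral_ite_zero_of_indepFun hcoin_meas hp0 hcoin
          (hf.comp_aestronglyMeasurable hY.aestronglyMeasurable)
          (hind.comp measurable_id hf.measurable)
    _ = (1 - p) * (‖A‖ ^ 2 + ∫ a, ‖Y a - v‖ ^ 2 ∂μ) := by
        rw [integral_norm_add_sq_of_integral_eq_zero A hY_sub hY_centred]
    _ ≤ (1 - p) * (‖A‖ ^ 2 + θ * ‖v‖ ^ 2) := by
        have h1p : 0 ≤ 1 - p := by linarith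
        gcongr
        exact hθ v
    _ = (1 - p) * ‖A‖ ^ 2 + (1 - p) * θ * ‖v‖ ^ 2 := by ring

/-- Lemma on the averaged MARINA-P control variable: with a collection
`{C_i} ∈ P(θ)` (each unbiased, and `E‖(1/n)∑ C_i(v) - v‖² ≤ θ‖v‖²`) and the update
`w_i^{t+1} = x^{t+1}` w.p. `p` (same coin for all `i`), else
`w_i^{t+1} = w_i^t + C_i(x^{t+1} - x^t)`, the average `w^t = (1/n)∑ w_i^t` satisfies
`E‖w^{t+1} - x^{t+1}‖² ≤ (1-p)‖w^t - x^t‖² + (1-p) θ ‖x^{t+1} - x^t‖²`. -/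
theorem stmt_18 {d n : ℕ} (hn : 0 < n) {Ω : Type*} [MeasurableSpace Ω]
    (μ : Measure Ω) [IsProbabilityMeasure μ]
    (θ p : ℝ) (hθ0 : 0 ≤ θ) (hp0 : 0 ≤ p) (hp1 : p ≤ 1)
    (C : Fin n → EuclideanSpace ℝ (Fin d) → Ω → EuclideanSpace ℝ (Fin d))
    (coin : Ω → Bool) (hcoin_meas : Measurable coin)
    (hcoin : μ {a | coin a = true} = ENNReal.ofReal p)
    (hL2 : ∀ i v, MemLp (C i v) 2 μ)
    (hunb : ∀ i v, (∫ a, C i v a ∂μ) = v)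
    (hθ : ∀ v, (∫ a, ‖(n : ℝ)⁻¹ • (∑ i, C i v a) - v‖ ^ 2 ∂μ) ≤ θ * ‖v‖ ^ 2)
    (wt : Fin n → EuclideanSpace ℝ (Fin d)) (xt xt1 : EuclideanSpace ℝ (Fin d))
    (hind : IndepFun coin (fun a => (n : ℝ)⁻¹ • (∑ i, C i (xt1 - xt) a)) μ)
    (w1 : Fin n → Ω → EuclideanSpace ℝ (Fin d))
    (hw1 : ∀ i a, w1 i a = if coin a then xt1 else wt i + C i (xt1 - xt) a) :
    (∫ a, ‖(n : ℝ)⁻¹ • (∑ i, w1 i a) - xt1‖ ^ 2 ∂μ)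
      ≤ (1 - p) * ‖(n : ℝ)⁻¹ • (∑ i, wt i) - xt‖ ^ 2
        + (1 - p) * θ * ‖xt1 - xt‖ ^ 2 :=
  stmt_18_general hn μ θ p hp0 hp1 C coin hcoin_meas hcoin hL2 hunb hθ wt xt xt1 hind w1 hw1
end
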